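/- arXiv:2412.01686 — 2 statements merged into one kernel-verified Lean document; each statement's English description precedes it below -/
import Mathlib

section
/- Square of the skew solution form (identity [V]² = {V P̂₁ V} + {V P_{[1,0]} V†}). Let p be a scattering function, x ∈ ℝ, and w₊, w₋ resolvent kernels for p. Then for all z, ζ ∈ (-∞,0]: [V](z,0)·[V](0,ζ) = {V P̂₁ V}(z,ζ) + {V P_{[1,0]} V†}(z,ζ); explicitly, (w₊ − w₋)(z,0)·(w₊ − w₋)(0,ζ) = ([[V P̂₁ V]] − [[V† P̂₁ V†]])(z,ζ) + ([[V P_{[1,0]} V†]] − [[V† P_{[1,0]} V]])(z,ζ). -/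
open MeasureTheory Filter

namespace NCKP

/-- `m × m` complex matrices. -/
abbrev Mat (m : ℕ) := Matrix (Fin m) (Fin m) ℂ

/-- Matrix-valued kernels on `ℝ²`. -/
abbrev Ker (m : ℕ) := ℝ → ℝ → Mat m

/-- Kernel product `(k₁∗k₂)(z,ζ) := ∫_{-∞}^0 k₁(z,ξ)·k₂(ξ,ζ) dξ`, entrywise Bochner integral. -/
noncomputable def conv {m : ℕ} (k₁ k₂ : Ker m) : Ker m :=
  fun z ζ => Matrix.of fun i j => ∫ ξ in Set.Iic (0:ℝ), (k₁ z ξ * k₂ ξ ζ) i j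

/-- `∂_z^a ∂_ζ^b` of a kernel, entrywise. -/
noncomputable def pder {m : ℕ} (a b : ℕ) (p : Ker m) : Ker m :=
  fun z ζ => Matrix.of fun i j =>
    iteratedDeriv a (fun z' => iteratedDeriv b (fun ζ' => p z' ζ' i j) ζ) z

/-- `p^x_{a,b}(z,ζ) := (∂_z^a ∂_ζ^b p)(z+x, ζ+x)`. -/
noncomputable def pSh {m : ℕ} (p : Ker m) (x : ℝ) (a b : ℕ) : Ker m :=
  fun z ζ => pder a b p (z + x) (ζ + x)

/-- `P̂₁ := p^x_{1,0} + p^x_{0,1}`. -/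
noncomputable def pHat1 {m : ℕ} (p : Ker m) (x : ℝ) : Ker m := pSh p x 1 0 + pSh p x 0 1

/-- `P_{[a,b]} := p^x_{a,b} − p^x_{b,a}`. -/
noncomputable def pBr {m : ℕ} (p : Ker m) (x : ℝ) (a b : ℕ) : Ker m := pSh p x a b - pSh p x b a

/-- Bounded, absolutely integrable over `(-∞,0]` in each argument, and tending to `0`
as either argument tends to `−∞` (entrywise). -/
def KernelDecay {m : ℕ} (k : Ker m) : Prop :=
  (∃ C, ∀ (z ζ : ℝ) (i j : Fin m), ‖k z ζ i j‖ ≤ C) ∧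
  (∀ (ζ : ℝ) (i j : Fin m), IntegrableOn (fun z => k z ζ i j) (Set.Iic (0:ℝ))) ∧
  (∀ (z : ℝ) (i j : Fin m), IntegrableOn (fun ζ => k z ζ i j) (Set.Iic (0:ℝ))) ∧
  (∀ (ζ : ℝ) (i j : Fin m), Tendsto (fun z => k z ζ i j) atBot (nhds 0)) ∧
  (∀ (z : ℝ) (i j : Fin m), Tendsto (fun ζ => k z ζ i j) atBot (nhds 0))

/-- A scattering function (with the `y`,`t` dependence suppressed): smooth, with all
partial derivatives bounded, integrable over `(-∞,0]` in each argument and decaying at `−∞`. -/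
def IsScattering {m : ℕ} (p : Ker m) : Prop :=
  (∀ i j : Fin m, ContDiff ℝ (⊤ : ℕ∞) (fun v : ℝ × ℝ => p v.1 v.2 i j)) ∧
  (∀ a b : ℕ, KernelDecay (pder a b p))

/-- Continuous on `(-∞,0]²`, bounded, and absolutely integrable in each argument. -/
def KernelNice {m : ℕ} (k : Ker m) : Prop :=
  (∀ i j : Fin m, ContinuousOn (fun v : ℝ × ℝ => k v.1 v.2 i j)
    (Set.Iic (0:ℝ) ×ˢ Set.Iic (0:ℝ))) ∧
  (∃ C, ∀ (z ζ : ℝ) (i j : Fin m), ‖k z ζ i j‖ ≤ C) ∧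
  (∀ (ζ : ℝ) (i j : Fin m), IntegrableOn (fun z => k z ζ i j) (Set.Iic (0:ℝ))) ∧
  (∀ (z : ℝ) (i j : Fin m), IntegrableOn (fun ζ => k z ζ i j) (Set.Iic (0:ℝ)))

/-- Entrywise iterated derivative in the parameter `x` of an `x`-family of kernels. -/
noncomputable def xder {m : ℕ} (n : ℕ) (w : ℝ → Ker m) : ℝ → Ker m :=
  fun x z ζ => Matrix.of fun i j => iteratedDeriv n (fun x' => w x' z ζ i j) x

/-- `w x` is the kernel of `V − id`, `V := (id − P)⁻¹`, with parameter `x`: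
a smooth family of kernels, whose partial derivatives are all bounded, integrable
and decaying, solving the resolvent equations `w = p^x + p^x∗w = p^x + w∗p^x`. -/
def IsResolventPlus {m : ℕ} (p : Ker m) (w : ℝ → Ker m) : Prop :=
  (∀ i j : Fin m, ContDiff ℝ (⊤ : ℕ∞) (fun v : ℝ × ℝ × ℝ => w v.1 v.2.1 v.2.2 i j)) ∧
  (∀ (n a b : ℕ) (x : ℝ), KernelDecay (pder a b (xder n w x))) ∧
  (∀ x, w x = pSh p x 0 0 + conv (pSh p x 0 0) (w x)) ∧
  (∀ x, w x = pSh p x 0 0 + conv (w x) (pSh p x 0 0))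

/-- `w x` is the kernel of `V† − id`, `V† := (id + P)⁻¹`, with parameter `x`:
it solves `w = −p^x − p^x∗w = −p^x − w∗p^x`. -/
def IsResolventMinus {m : ℕ} (p : Ker m) (w : ℝ → Ker m) : Prop :=
  (∀ i j : Fin m, ContDiff ℝ (⊤ : ℕ∞) (fun v : ℝ × ℝ × ℝ => w v.1 v.2.1 v.2.2 i j)) ∧
  (∀ (n a b : ℕ) (x : ℝ), KernelDecay (pder a b (xder n w x))) ∧
  (∀ x, w x = -(pSh p x 0 0) - conv (pSh p x 0 0) (w x)) ∧
  (∀ x, w x = -(pSh p x 0 0) - conv (w x) (pSh p x 0 0))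

/-- Kernel of the word `A·V'` where `V' = δ + v`. -/
noncomputable def aV {m : ℕ} (A v : Ker m) : Ker m := A + conv A v

/-- Kernel of the word `V·A` where `V = δ + u`. -/
noncomputable def vA {m : ℕ} (u A : Ker m) : Ker m := A + conv u A

/-- Kernel of the word `V A V'` where `V = δ+u`, `V' = δ+v`. -/
noncomputable def vAv {m : ℕ} (u A v : Ker m) : Ker m := vA u (aV A v)

/-- Kernel of the word `V A V' B V''` where `V = δ+u`, `V' = δ+v`, `V'' = δ+w'`. -/
noncomputable def vAvBv {m : ℕ} (u A v B w' : Ker m) : Ker m := vAv u (conv (aV A v) B) w'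

/-- Entrywise `∂_x` of an `x`-family of kernels. -/
noncomputable def dxK {m : ℕ} (E : ℝ → Ker m) (x : ℝ) : Ker m :=
  fun z ζ => Matrix.of fun i j => deriv (fun x' => E x' z ζ i j) x

end NCKP

/-!
Write `U = w₊ − w₋` and `P_{a,b} = p^x_{a,b}`. Differentiating the resolvent equations
`w₊ = P_{0,0} + w₊ ∗ P_{0,0}` and `w₋ = −P_{0,0} − w₋ ∗ P_{0,0}` (and their mirror images)
under the integral sign gives `∂_ζ U = [[V P_{0,1}]] + [[V† P_{0,1}]]` and
`∂_z U = [[P_{1,0} V]] + [[P_{1,0} V†]]`.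
Since `U(z, ξ) → 0` as `ξ → −∞`, the fundamental theorem of calculus applied to
`ξ ↦ U(z, ξ) U(ξ, ζ)` on `(−∞, 0]` yields `U(z,0) U(0,ζ) = (∂_ζ U ∗ U + U ∗ ∂_z U)(z, ζ)`.
By bilinearity and associativity of `∗`, `[[V A]] ∗ (w − w') = [[V A V]] − [[V A V']]` and
`(w − w') ∗ [[A V]] = [[V A V]] − [[V' A V]]` for `V = δ + w`, `V' = δ + w'`, and the eight resulting words regroup into the
right-hand side because `P̂₁ = P_{1,0} + P_{0,1}` and `P_{[1,0]} = P_{1,0} − P_{0,1}`.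
-/

open Set
open scoped Matrix

namespace NCKP

variable {m : ℕ}

section MatrixEntries

lemma mul_apply_eq_transpose_mul_apply (A B : Mat m) (i j : Fin m) :
    (A * B) i j = (Bᵀ * Aᵀ) j i := by
  rw [← Matrix.transpose_mul]; rfl

lemma norm_mul_apply_le (A B : Mat m) (i j : Fin m) {C : Fin m → ℝ} (hB : ∀ k, ‖B k j‖ ≤ C k) :
    ‖(A * B) i j‖ ≤ ∑ k, ‖A i k‖ * C k := by
  rw [Matrix.mul_apply]
  refine (norm_sum_le _ _).trans (Finset.sum_le_sum fun k _ => ?_)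
  rw [norm_mul]
  exact mul_le_mul_of_nonneg_left (hB k) (norm_nonneg _)

lemma norm_mul_mul_apply_le (A B D : Mat m) (i j : Fin m) {C : ℝ} (hB : ∀ l k, ‖B l k‖ ≤ C) :
    ‖(A * B * D) i j‖ ≤ (∑ l, ‖A i l‖ * C) * ∑ k, ‖D k j‖ := by
  rw [Matrix.mul_apply, Finset.mul_sum]
  refine (norm_sum_le _ _).trans (Finset.sum_le_sum fun k _ => ?_)
  rw [norm_mul]
  exact mul_le_mul_of_nonneg_right (norm_mul_apply_le _ _ i k (hB · k)) (norm_nonneg _)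

lemma hasDerivAt_mul_apply {f g : ℝ → Mat m} {f' g' : Mat m} {t : ℝ} {i j : Fin m}
    (hf : ∀ k, HasDerivAt (fun s => f s i k) (f' i k) t)
    (hg : ∀ k, HasDerivAt (fun s => g s k j) (g' k j) t) :
    HasDerivAt (fun s => (f s * g s) i j) ((f' * g t + f t * g') i j) t := by
  simp only [Matrix.mul_apply, Matrix.add_apply, ← Finset.sum_add_distrib]
  exact HasDerivAt.fun_sum fun k _ => (hf k).mul (hg k)

end MatrixEntries

section ParametricIntegral

variable {α : Type*} [MeasurableSpace α] {μ : Measure α} {i j : Fin m}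

lemma integrable_mul_apply_of_left {f g : α → Mat m} {C : Fin m → ℝ}
    (hf : ∀ k, Integrable (fun ξ => f ξ i k) μ)
    (hg : ∀ k, AEStronglyMeasurable (fun ξ => g ξ k j) μ) (hC : ∀ ξ k, ‖g ξ k j‖ ≤ C k) :
    Integrable (fun ξ => (f ξ * g ξ) i j) μ := by
  simp only [Matrix.mul_apply]
  exact integrable_finsetSum _ fun k _ => (hf k).mul_bdd (hg k) (ae_of_all _ fun ξ => hC ξ k)

lemma integrable_mul_apply_of_right {f g : α → Mat m} {C : Fin m → ℝ}
    (hf : ∀ k, AEStronglyMeasurable (fun ξ => f ξ i k) μ) (hC : ∀ ξ k, ‖f ξ i k‖ ≤ C k)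
    (hg : ∀ k, Integrable (fun ξ => g ξ k j) μ) :
    Integrable (fun ξ => (f ξ * g ξ) i j) μ := by
  simp only [Matrix.mul_apply]
  exact integrable_finsetSum _ fun k _ => (hg k).bdd_mul (hf k) (ae_of_all _ fun ξ => hC ξ k)

lemma continuous_integral_mul_apply {f : α → Mat m} {g : ℝ → α → Mat m} {C : Fin m → ℝ}
    (hf : ∀ k, Integrable (fun ξ => f ξ i k) μ)
    (hg : ∀ t k, AEStronglyMeasurable (fun ξ => g t ξ k j) μ)
    (hC : ∀ t ξ k, ‖g t ξ k j‖ ≤ C k) (hgc : ∀ ξ, Continuous fun t => g t ξ) :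
    Continuous fun t => ∫ ξ, (f ξ * g t ξ) i j ∂μ :=
  continuous_of_dominated
    (fun t => (integrable_mul_apply_of_left hf (hg t) (hC t)).aestronglyMeasurable)
    (fun t => ae_of_all _ fun ξ => norm_mul_apply_le _ _ i j (hC t ξ))
    (integrable_finsetSum _ fun k _ => (hf k).norm.mul_const (C k))
    (ae_of_all _ fun ξ => (continuous_const.matrix_mul (hgc ξ)).matrix_elem i j)

lemma exists_norm_integral_mul_apply_le {f : α → Mat m} {g : ℝ → α → Mat m} {C : Fin m → ℝ}
    (hf : ∀ k, Integrable (fun ξ => f ξ i k) μ) (hC : ∀ t ξ k, ‖g t ξ k j‖ ≤ C k) :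
    ∃ C', ∀ t, ‖∫ ξ, (f ξ * g t ξ) i j ∂μ‖ ≤ C' :=
  ⟨_, fun t => norm_integral_le_of_norm_le
    (integrable_finsetSum _ fun k _ => (hf k).norm.mul_const (C k))
    (ae_of_all _ fun ξ => norm_mul_apply_le _ _ i j (hC t ξ))⟩

lemma hasDerivAt_integral_mul_apply {f : α → Mat m} {g g' : ℝ → α → Mat m}
    {C C' : Fin m → ℝ} {t₀ : ℝ} (hf : ∀ k, Integrable (fun ξ => f ξ i k) μ)
    (hg : ∀ t k, AEStronglyMeasurable (fun ξ => g t ξ k j) μ) (hC : ∀ t ξ k, ‖g t ξ k j‖ ≤ C k)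
    (hg' : ∀ k, AEStronglyMeasurable (fun ξ => g' t₀ ξ k j) μ)
    (hC' : ∀ t ξ k, ‖g' t ξ k j‖ ≤ C' k)
    (hd : ∀ t ξ k, HasDerivAt (fun s => g s ξ k j) (g' t ξ k j) t) :
    HasDerivAt (fun t => ∫ ξ, (f ξ * g t ξ) i j ∂μ) (∫ ξ, (f ξ * g' t₀ ξ) i j ∂μ) t₀ := by
  refine (hasDerivAt_integral_of_dominated_loc_of_deriv_le (s := univ) univ_mem
    (Eventually.of_forall fun t => (integrable_mul_apply_of_left hf (hg t) (hC t)).1)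
    (integrable_mul_apply_of_left hf (hg t₀) (hC t₀))
    (integrable_mul_apply_of_left hf hg' (hC' t₀)).1
    (ae_of_all _ fun ξ t _ => norm_mul_apply_le _ _ i j (hC' t ξ))
    (integrable_finsetSum _ fun k _ => (hf k).norm.mul_const (C' k))
    (ae_of_all _ fun ξ t _ => ?_)).2
  simp only [Matrix.mul_apply]
  exact HasDerivAt.fun_sum fun k _ => (hd t ξ k).const_mul _

lemma continuous_integral_mul_apply_left {f : α → Mat m} {g : ℝ → α → Mat m} {C : Fin m → ℝ}
    (hf : ∀ k, Integrable (fun ξ => f ξ k j) μ)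
    (hg : ∀ t k, AEStronglyMeasurable (fun ξ => g t ξ i k) μ)
    (hC : ∀ t ξ k, ‖g t ξ i k‖ ≤ C k) (hgc : ∀ ξ, Continuous fun t => g t ξ) :
    Continuous fun t => ∫ ξ, (g t ξ * f ξ) i j ∂μ := by
  simp only [mul_apply_eq_transpose_mul_apply (g _ _)]
  exact continuous_integral_mul_apply (f := fun ξ => (f ξ)ᵀ) (g := fun t ξ => (g t ξ)ᵀ)
    hf hg hC fun ξ => (hgc ξ).matrix_transpose

lemma exists_norm_integral_mul_apply_left_le {f : α → Mat m} {g : ℝ → α → Mat m}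
    {C : Fin m → ℝ} (hf : ∀ k, Integrable (fun ξ => f ξ k j) μ)
    (hC : ∀ t ξ k, ‖g t ξ i k‖ ≤ C k) :
    ∃ C', ∀ t, ‖∫ ξ, (g t ξ * f ξ) i j ∂μ‖ ≤ C' := by
  simp only [mul_apply_eq_transpose_mul_apply (g _ _)]
  exact exists_norm_integral_mul_apply_le (f := fun ξ => (f ξ)ᵀ) (g := fun t ξ => (g t ξ)ᵀ)
    hf hC

lemma hasDerivAt_integral_mul_apply_left {f : α → Mat m} {g g' : ℝ → α → Mat m}
    {C C' : Fin m → ℝ} {t₀ : ℝ} (hf : ∀ k, Integrable (fun ξ => f ξ k j) μ)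
    (hg : ∀ t k, AEStronglyMeasurable (fun ξ => g t ξ i k) μ) (hC : ∀ t ξ k, ‖g t ξ i k‖ ≤ C k)
    (hg' : ∀ k, AEStronglyMeasurable (fun ξ => g' t₀ ξ i k) μ)
    (hC' : ∀ t ξ k, ‖g' t ξ i k‖ ≤ C' k)
    (hd : ∀ t ξ k, HasDerivAt (fun s => g s ξ i k) (g' t ξ i k) t) :
    HasDerivAt (fun t => ∫ ξ, (g t ξ * f ξ) i j ∂μ) (∫ ξ, (g' t₀ ξ * f ξ) i j ∂μ) t₀ := by
  simp only [mul_apply_eq_transpose_mul_apply (g _ _), mul_apply_eq_transpose_mul_apply (g' _ _)]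
  exact hasDerivAt_integral_mul_apply (f := fun ξ => (f ξ)ᵀ) (g := fun t ξ => (g t ξ)ᵀ)
    (g' := fun t ξ => (g' t ξ)ᵀ) hf hg hC hg' hC' hd

lemma of_integral_mul_apply {F : α → Mat m} (B : Mat m)
    (hF : ∀ k, Integrable (fun ξ => F ξ i k) μ) :
    (Matrix.of (fun i k => ∫ ξ, F ξ i k ∂μ) * B) i j = ∫ ξ, (F ξ * B) i j ∂μ := by
  simp only [Matrix.mul_apply, Matrix.of_apply, ← integral_mul_const]
  exact (integral_finsetSum _ fun k _ => (hF k).mul_const _).symm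

lemma mul_of_integral_apply {F : α → Mat m} (B : Mat m)
    (hF : ∀ k, Integrable (fun ξ => F ξ k j) μ) :
    (B * Matrix.of (fun k j => ∫ ξ, F ξ k j ∂μ)) i j = ∫ ξ, (B * F ξ) i j ∂μ := by
  simp only [Matrix.mul_apply, Matrix.of_apply, ← integral_const_mul]
  exact (integral_finsetSum _ fun k _ => (hF k).const_mul _).symm

end ParametricIntegral

lemma integrableOn_Iic_comp_add {f : ℝ → ℂ} (hc : Continuous f)
    (hf : IntegrableOn f (Iic 0)) (x : ℝ) : IntegrableOn (fun t => f (t + x)) (Iic 0) := by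
  have hfx : IntegrableOn f (Iic x) :=
    (hf.union hc.integrableOn_Icc).mono_set fun t ht => by
      rcases le_or_gt t 0 with h | h
      exacts [Or.inl h, Or.inr ⟨h.le, ht⟩]
  have hpre : (· + x) ⁻¹' Iic x = Iic (0 : ℝ) := by ext t; simp
  have := ((measurePreserving_add_right volume x).integrableOn_comp_preimage
    (MeasurableEquiv.addRight x).measurableEmbedding).mpr hfx
  rwa [hpre] at this

lemma hasDerivAt_fst_of_contDiff {f : ℝ × ℝ → ℂ} (hf : ContDiff ℝ 1 f) (t ζ : ℝ) :
    HasDerivAt (fun s => f (s, ζ)) (fderiv ℝ f (t, ζ) (1, 0)) t :=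
  (hf.differentiable one_ne_zero (t, ζ)).hasFDerivAt.comp_hasDerivAt t
    ((hasDerivAt_id t).prodMk (hasDerivAt_const t ζ))

lemma hasDerivAt_snd_of_contDiff {f : ℝ × ℝ → ℂ} (hf : ContDiff ℝ 1 f) (z t : ℝ) :
    HasDerivAt (fun s => f (z, s)) (fderiv ℝ f (z, t) (0, 1)) t :=
  (hf.differentiable one_ne_zero (z, t)).hasFDerivAt.comp_hasDerivAt t
    ((hasDerivAt_const t z).prodMk (hasDerivAt_id t))

section Kernels

structure Regular (k : Ker m) : Prop where
  continuous : Continuous fun v : ℝ × ℝ => k v.1 v.2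
  bounded : ∃ C, ∀ z ζ i j, ‖k z ζ i j‖ ≤ C
  integrableOn_fst : ∀ ζ i j, IntegrableOn (fun z => k z ζ i j) (Iic 0)
  integrableOn_snd : ∀ z i j, IntegrableOn (fun ζ => k z ζ i j) (Iic 0)

/-- The regularity left on a kernel product `a ∗ b` of regular kernels: it need not be
integrable along lines. -/
structure SliceBounded (k : Ker m) : Prop where
  continuous_fst : ∀ ζ, Continuous fun z => k z ζ
  continuous_snd : ∀ z, Continuous fun ζ => k z ζ
  bounded_fst : ∀ ζ i j, ∃ C, ∀ z, ‖k z ζ i j‖ ≤ C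
  bounded_snd : ∀ z i j, ∃ C, ∀ ζ, ‖k z ζ i j‖ ≤ C

def ConvIntegrable (a b : Ker m) : Prop :=
  ∀ z ζ i j, IntegrableOn (fun ξ => (a z ξ * b ξ ζ) i j) (Iic 0)

variable {a b c k : Ker m}

lemma Regular.continuous_fst (hk : Regular k) (ζ : ℝ) : Continuous fun z => k z ζ :=
  hk.continuous.comp (continuous_id.prodMk continuous_const)

lemma Regular.continuous_snd (hk : Regular k) (z : ℝ) : Continuous fun ζ => k z ζ :=
  hk.continuous.comp (continuous_const.prodMk continuous_id)

lemma KernelDecay.regular (hk : KernelDecay k) (hc : Continuous fun v : ℝ × ℝ => k v.1 v.2) :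
    Regular k :=
  ⟨hc, hk.1, hk.2.1, hk.2.2.1⟩

lemma Regular.comp_add (hk : Regular k) (x : ℝ) : Regular fun z ζ => k (z + x) (ζ + x) where
  continuous := hk.continuous.comp (by fun_prop : Continuous fun v : ℝ × ℝ => (v.1 + x, v.2 + x))
  bounded := hk.bounded.imp fun _ hC z ζ => hC (z + x) (ζ + x)
  integrableOn_fst ζ i j := integrableOn_Iic_comp_add
    ((hk.continuous_fst (ζ + x)).matrix_elem i j) (hk.integrableOn_fst (ζ + x) i j) x
  integrableOn_snd z i j := integrableOn_Iic_comp_add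
    ((hk.continuous_snd (z + x)).matrix_elem i j) (hk.integrableOn_snd (z + x) i j) x

lemma Regular.sub (ha : Regular a) (hb : Regular b) : Regular (a - b) where
  continuous := ha.continuous.sub hb.continuous
  bounded := by
    obtain ⟨Ca, hCa⟩ := ha.bounded
    obtain ⟨Cb, hCb⟩ := hb.bounded
    exact ⟨Ca + Cb, fun z ζ i j =>
      (norm_sub_le _ _).trans (add_le_add (hCa z ζ i j) (hCb z ζ i j))⟩
  integrableOn_fst ζ i j := (ha.integrableOn_fst ζ i j).sub (hb.integrableOn_fst ζ i j)
  integrableOn_snd z i j := (ha.integrableOn_snd z i j).sub (hb.integrableOn_snd z i j)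

lemma Regular.sliceBounded (hk : Regular k) : SliceBounded k where
  continuous_fst := hk.continuous_fst
  continuous_snd := hk.continuous_snd
  bounded_fst _ i j := hk.bounded.imp fun _ hC z => hC z _ i j
  bounded_snd _ i j := hk.bounded.imp fun _ hC ζ => hC _ ζ i j

lemma SliceBounded.add (ha : SliceBounded a) (hb : SliceBounded b) : SliceBounded (a + b) where
  continuous_fst ζ := (ha.continuous_fst ζ).add (hb.continuous_fst ζ)
  continuous_snd z := (ha.continuous_snd z).add (hb.continuous_snd z)
  bounded_fst ζ i j := by
    obtain ⟨Ca, hCa⟩ := ha.bounded_fst ζ i j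
    obtain ⟨Cb, hCb⟩ := hb.bounded_fst ζ i j
    exact ⟨Ca + Cb, fun z => (norm_add_le _ _).trans (add_le_add (hCa z) (hCb z))⟩
  bounded_snd z i j := by
    obtain ⟨Ca, hCa⟩ := ha.bounded_snd z i j
    obtain ⟨Cb, hCb⟩ := hb.bounded_snd z i j
    exact ⟨Ca + Cb, fun ζ => (norm_add_le _ _).trans (add_le_add (hCa ζ) (hCb ζ))⟩

lemma sliceBounded_conv (ha : Regular a) (hb : Regular b) : SliceBounded (conv a b) := by
  obtain ⟨Ca, hCa⟩ := ha.bounded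
  obtain ⟨Cb, hCb⟩ := hb.bounded
  exact {
    continuous_fst := fun ζ => continuous_matrix fun i j =>
      continuous_integral_mul_apply_left (C := fun _ => Ca) (hb.integrableOn_fst ζ · j)
        (fun z k => ((ha.continuous_snd z).matrix_elem i k).aestronglyMeasurable)
        (fun z ξ k => hCa z ξ i k) (ha.continuous_fst ·)
    continuous_snd := fun z => continuous_matrix fun i j =>
      continuous_integral_mul_apply (C := fun _ => Cb) (ha.integrableOn_snd z i)
        (fun ζ k => ((hb.continuous_fst ζ).matrix_elem k j).aestronglyMeasurable)
        (fun ζ ξ k => hCb ξ ζ k j) (hb.continuous_snd ·)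
    bounded_fst := fun ζ i j =>
      exists_norm_integral_mul_apply_left_le (C := fun _ => Ca) (hb.integrableOn_fst ζ · j)
        (fun z ξ k => hCa z ξ i k)
    bounded_snd := fun z i j =>
      exists_norm_integral_mul_apply_le (C := fun _ => Cb) (ha.integrableOn_snd z i)
        (fun ζ ξ k => hCb ξ ζ k j) }

lemma sliceBounded_vA (ha : Regular a) (hb : Regular b) : SliceBounded (vA a b) :=
  hb.sliceBounded.add (sliceBounded_conv ha hb)

lemma sliceBounded_aV (ha : Regular a) (hb : Regular b) : SliceBounded (aV a b) :=
  ha.sliceBounded.add (sliceBounded_conv ha hb)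

lemma ConvIntegrable.of_regular_left (ha : Regular a) (hb : SliceBounded b) :
    ConvIntegrable a b := fun z ζ i j => by
  choose C hC using hb.bounded_fst ζ
  exact integrable_mul_apply_of_left (C := fun k => C k j) (ha.integrableOn_snd z i)
    (fun k => ((hb.continuous_fst ζ).matrix_elem k j).aestronglyMeasurable) (fun ξ k => hC k j ξ)

lemma ConvIntegrable.of_regular_right (ha : SliceBounded a) (hb : Regular b) :
    ConvIntegrable a b := fun z ζ i j => by
  choose C hC using ha.bounded_snd z
  exact integrable_mul_apply_of_right (C := fun k => C i k)
    (fun k => ((ha.continuous_snd z).matrix_elem i k).aestronglyMeasurable) (fun ξ k => hC i k ξ)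
    (hb.integrableOn_fst ζ · j)

lemma conv_add_left (h₁ : ConvIntegrable a c) (h₂ : ConvIntegrable b c) :
    conv (a + b) c = conv a c + conv b c := by
  funext z ζ; ext i j
  simp only [conv, Pi.add_apply, Matrix.add_apply, add_mul, Matrix.of_apply]
  exact integral_add (h₁ z ζ i j) (h₂ z ζ i j)

lemma conv_sub_left (h₁ : ConvIntegrable a c) (h₂ : ConvIntegrable b c) :
    conv (a - b) c = conv a c - conv b c := by
  funext z ζ; ext i j
  simp only [conv, Pi.sub_apply, Matrix.sub_apply, sub_mul, Matrix.of_apply]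
  exact integral_sub (h₁ z ζ i j) (h₂ z ζ i j)

lemma conv_add_right (h₁ : ConvIntegrable a b) (h₂ : ConvIntegrable a c) :
    conv a (b + c) = conv a b + conv a c := by
  funext z ζ; ext i j
  simp only [conv, Pi.add_apply, Matrix.add_apply, mul_add, Matrix.of_apply]
  exact integral_add (h₁ z ζ i j) (h₂ z ζ i j)

lemma conv_sub_right (h₁ : ConvIntegrable a b) (h₂ : ConvIntegrable a c) :
    conv a (b - c) = conv a b - conv a c := by
  funext z ζ; ext i j
  simp only [conv, Pi.sub_apply, Matrix.sub_apply, mul_sub, Matrix.of_apply]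
  exact integral_sub (h₁ z ζ i j) (h₂ z ζ i j)

lemma conv_assoc (ha : Regular a) (hb : Regular b) (hc : Regular c) :
    conv (conv a b) c = conv a (conv b c) := by
  funext z ζ; ext i j
  obtain ⟨Cb, hCb⟩ := hb.bounded
  have hab := ConvIntegrable.of_regular_left ha hb.sliceBounded
  have hbc := ConvIntegrable.of_regular_right hb.sliceBounded hc
  set G : ℝ → ℝ → ℂ := fun ξ η => (a z η * b η ξ * c ξ ζ) i j
  have hG : Integrable (Function.uncurry G)
      ((volume.restrict (Iic 0)).prod (volume.restrict (Iic 0))) := by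
    have hcont : Continuous (Function.uncurry G) :=
      ((((ha.continuous_snd z).comp continuous_snd).matrix_mul
        (hb.continuous.comp (continuous_snd.prodMk continuous_fst))).matrix_mul
        ((hc.continuous_fst ζ).comp continuous_fst)).matrix_elem i j
    refine ((integrable_finsetSum Finset.univ fun k _ => (hc.integrableOn_fst ζ k j).norm).mul_prod
      (integrable_finsetSum Finset.univ fun l _ =>
        (ha.integrableOn_snd z i l).norm.mul_const Cb)).mono'
      hcont.aestronglyMeasurable (ae_of_all _ fun q => ?_)
    rw [mul_comm]
    exact norm_mul_mul_apply_le _ _ _ i j fun l k => hCb q.2 q.1 l k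
  calc conv (conv a b) c z ζ i j = ∫ ξ in Iic 0, ∫ η in Iic 0, G ξ η :=
        integral_congr_ae (ae_of_all _ fun ξ => of_integral_mul_apply _ (hab z ξ i))
    _ = ∫ η in Iic 0, ∫ ξ in Iic 0, G ξ η := integral_integral_swap hG
    _ = conv a (conv b c) z ζ i j := by
        refine integral_congr_ae (ae_of_all _ fun η => ?_)
        simp only [G, Matrix.mul_assoc]
        exact (mul_of_integral_apply _ (hbc η ζ · j)).symm

end Kernels

section Words

variable {u u' v v' A B : Ker m}

lemma conv_vA_eq_vAv_sub (hu : Regular u) (hA : Regular A) (hv : Regular v) :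
    conv (vA u A) v = vAv u A v - vA u A := by
  rw [vA, conv_add_left (.of_regular_left hA hv.sliceBounded)
      (.of_regular_right (sliceBounded_conv hu hA) hv),
    conv_assoc hu hA hv, vAv, vA, aV, conv_add_right (.of_regular_left hu hA.sliceBounded)
      (.of_regular_left hu (sliceBounded_conv hA hv))]
  abel

lemma conv_vA_sub (hu : Regular u) (hA : Regular A) (hv : Regular v) (hv' : Regular v') :
    conv (vA u A) (v - v') = vAv u A v - vAv u A v' := by
  rw [conv_sub_right (.of_regular_right (sliceBounded_vA hu hA) hv)
      (.of_regular_right (sliceBounded_vA hu hA) hv'),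
    conv_vA_eq_vAv_sub hu hA hv, conv_vA_eq_vAv_sub hu hA hv']
  abel

lemma conv_sub_aV (hu : Regular u) (hu' : Regular u') (hA : Regular A) (hv : Regular v) :
    conv (u - u') (aV A v) = vAv u A v - vAv u' A v := by
  rw [conv_sub_left (.of_regular_left hu (sliceBounded_aV hA hv))
    (.of_regular_left hu' (sliceBounded_aV hA hv)), vAv, vAv, vA, vA]
  abel

lemma vAv_add_mid (hu : Regular u) (hA : Regular A) (hB : Regular B) (hv : Regular v) :
    vAv u (A + B) v = vAv u A v + vAv u B v := by
  have hAB : aV (A + B) v = aV A v + aV B v := by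
    rw [aV, aV, aV, conv_add_left (.of_regular_left hA hv.sliceBounded)
      (.of_regular_left hB hv.sliceBounded)]
    abel
  rw [vAv, vA, hAB, conv_add_right (.of_regular_left hu (sliceBounded_aV hA hv))
    (.of_regular_left hu (sliceBounded_aV hB hv)), vAv, vAv, vA, vA]
  abel

lemma vAv_sub_mid (hu : Regular u) (hA : Regular A) (hB : Regular B) (hv : Regular v) :
    vAv u (A - B) v = vAv u A v - vAv u B v := by
  have hAB : aV (A - B) v = aV A v - aV B v := by
    rw [aV, aV, aV, conv_sub_left (.of_regular_left hA hv.sliceBounded)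
      (.of_regular_left hB hv.sliceBounded)]
    abel
  rw [vAv, vA, hAB, conv_sub_right (.of_regular_left hu (sliceBounded_aV hA hv))
    (.of_regular_left hu (sliceBounded_aV hB hv)), vAv, vAv, vA, vA]
  abel

lemma conv_vA_add_conv_aV (hu : Regular u) (hv : Regular v) (hA : Regular A) (hB : Regular B) :
    conv (vA u B + vA v B) (u - v) + conv (u - v) (aV A u + aV A v) =
      (vAv u (A + B) u - vAv v (A + B) v) + (vAv u (A - B) v - vAv v (A - B) u) := by
  have huv := hu.sub hv
  rw [conv_add_left (.of_regular_right (sliceBounded_vA hu hB) huv)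
      (.of_regular_right (sliceBounded_vA hv hB) huv),
    conv_add_right (.of_regular_left huv (sliceBounded_aV hA hu))
      (.of_regular_left huv (sliceBounded_aV hA hv)),
    conv_vA_sub hu hB hu hv, conv_vA_sub hv hB hu hv, conv_sub_aV hu hv hA hu,
    conv_sub_aV hu hv hA hv, vAv_add_mid hu hA hB hu, vAv_add_mid hv hA hB hv,
    vAv_sub_mid hu hA hB hv, vAv_sub_mid hv hA hB hu]
  abel

end Words

section Calculus

variable {q q' w U U₁ U₂ : Ker m}

lemma hasDerivAt_vA_snd (hw : Regular w) (hq : Regular q) (hq' : Regular q')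
    (hd : ∀ ξ t i j, HasDerivAt (fun s => q ξ s i j) (q' ξ t i j) t) (z t : ℝ) (i j : Fin m) :
    HasDerivAt (fun s => vA w q z s i j) (vA w q' z t i j) t := by
  obtain ⟨C, hC⟩ := hq.bounded
  obtain ⟨C', hC'⟩ := hq'.bounded
  exact (hd z t i j).add (hasDerivAt_integral_mul_apply (C := fun _ => C) (C' := fun _ => C')
    (hw.integrableOn_snd z i)
    (fun s k => ((hq.continuous_fst s).matrix_elem k j).aestronglyMeasurable)
    (fun s ξ k => hC ξ s k j)
    (fun k => ((hq'.continuous_fst t).matrix_elem k j).aestronglyMeasurable)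
    (fun s ξ k => hC' ξ s k j) (fun s ξ k => hd ξ s k j))

lemma hasDerivAt_aV_fst (hq : Regular q) (hq' : Regular q') (hw : Regular w)
    (hd : ∀ t ξ i j, HasDerivAt (fun s => q s ξ i j) (q' t ξ i j) t) (t ζ : ℝ) (i j : Fin m) :
    HasDerivAt (fun s => aV q w s ζ i j) (aV q' w t ζ i j) t := by
  obtain ⟨C, hC⟩ := hq.bounded
  obtain ⟨C', hC'⟩ := hq'.bounded
  exact (hd t ζ i j).add (hasDerivAt_integral_mul_apply_left (C := fun _ => C)
    (C' := fun _ => C') (hw.integrableOn_fst ζ · j)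
    (fun s k => ((hq.continuous_snd s).matrix_elem i k).aestronglyMeasurable)
    (fun s ξ k => hC s ξ i k)
    (fun k => ((hq'.continuous_snd t).matrix_elem i k).aestronglyMeasurable)
    (fun s ξ k => hC' s ξ i k) (fun s ξ k => hd s ξ i k))

lemma mul_at_zero_eq_conv_add_conv (hU : Regular U) (hU₁ : SliceBounded U₁)
    (hU₂ : SliceBounded U₂) (hd₁ : ∀ t ζ i j, HasDerivAt (fun s => U s ζ i j) (U₁ t ζ i j) t)
    (hd₂ : ∀ z t i j, HasDerivAt (fun s => U z s i j) (U₂ z t i j) t)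
    (hlim : ∀ z i j, Tendsto (fun t => U z t i j) atBot (nhds 0)) (z ζ : ℝ) :
    U z 0 * U 0 ζ = conv U₂ U z ζ + conv U U₁ z ζ := by
  ext i j
  have hint₁ := ConvIntegrable.of_regular_right hU₂ hU z ζ i j
  have hint₂ := ConvIntegrable.of_regular_left hU hU₁ z ζ i j
  obtain ⟨C, hC⟩ := hU.bounded
  have hprod : Tendsto (fun t => (U z t * U t ζ) i j) atBot (nhds 0) := by
    simpa [Matrix.mul_apply] using tendsto_finsetSum Finset.univ fun k _ =>
      (hlim z i k).zero_mul_isBoundedUnder_le (isBoundedUnder_of ⟨C, fun t => hC t ζ k j⟩)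
  have hftc := integral_Iic_of_hasDerivAt_of_tendsto'
    (fun t _ => hasDerivAt_mul_apply (fun k => hd₂ z t i k) (fun k => hd₁ t ζ k j))
    (hint₁.add hint₂) hprod
  simp only [Matrix.add_apply, integral_add hint₁ hint₂, sub_zero] at hftc
  exact hftc.symm

end Calculus

theorem skew_form_squared_of_regular {Q₀ Q₁ Q₂ W M : Ker m} (hQ₀ : Regular Q₀)
    (hQ₁ : Regular Q₁) (hQ₂ : Regular Q₂)
    (hd₁ : ∀ t ζ i j, HasDerivAt (fun s => Q₀ s ζ i j) (Q₁ t ζ i j) t)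
    (hd₂ : ∀ z t i j, HasDerivAt (fun s => Q₀ z s i j) (Q₂ z t i j) t)
    (hW : Regular W) (hM : Regular M)
    (hWlim : ∀ z i j, Tendsto (fun t => W z t i j) atBot (nhds 0))
    (hMlim : ∀ z i j, Tendsto (fun t => M z t i j) atBot (nhds 0))
    (hWl : W = Q₀ + conv Q₀ W) (hWr : W = Q₀ + conv W Q₀)
    (hMl : M = -Q₀ - conv Q₀ M) (hMr : M = -Q₀ - conv M Q₀) (z ζ : ℝ) :
    (W - M) z 0 * (W - M) 0 ζ =
      (vAv W (Q₁ + Q₂) W - vAv M (Q₁ + Q₂) M) z ζ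
        + (vAv W (Q₁ - Q₂) M - vAv M (Q₁ - Q₂) W) z ζ := by
  have hUl : W - M = aV Q₀ W + aV Q₀ M := by
    calc W - M = (Q₀ + conv Q₀ W) - (-Q₀ - conv Q₀ M) := by rw [← hWl, ← hMl]
      _ = _ := by rw [aV, aV]; abel
  have hUr : W - M = vA W Q₀ + vA M Q₀ := by
    calc W - M = (Q₀ + conv W Q₀) - (-Q₀ - conv M Q₀) := by rw [← hWr, ← hMr]
      _ = _ := by rw [vA, vA]; abel
  rw [mul_at_zero_eq_conv_add_conv (hW.sub hM)
    ((sliceBounded_aV hQ₁ hW).add (sliceBounded_aV hQ₁ hM))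
    ((sliceBounded_vA hW hQ₂).add (sliceBounded_vA hM hQ₂))
    (fun t ζ i j => by
      rw [hUl]
      exact (hasDerivAt_aV_fst hQ₀ hQ₁ hW hd₁ t ζ i j).add
        (hasDerivAt_aV_fst hQ₀ hQ₁ hM hd₁ t ζ i j))
    (fun z t i j => by
      rw [hUr]
      exact (hasDerivAt_vA_snd hW hQ₀ hQ₂ hd₂ z t i j).add
        (hasDerivAt_vA_snd hM hQ₀ hQ₂ hd₂ z t i j))
    (fun z i j => by simpa using (hWlim z i j).sub (hMlim z i j)) z ζ]
  exact congrFun (congrFun (conv_vA_add_conv_aV hW hM hQ₁ hQ₂) z) ζ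

section Scattering

variable {p : Ker m}

lemma pder_zero_zero (k : Ker m) : pder 0 0 k = k := by
  funext z ζ; ext i j; simp [pder]

lemma xder_zero (w : ℝ → Ker m) : xder 0 w = w := by
  funext x z ζ; ext i j; simp [xder]

lemma continuous_apply_of_contDiff {w : ℝ → Ker m}
    (hw : ∀ i j, ContDiff ℝ (⊤ : ℕ∞) fun v : ℝ × ℝ × ℝ => w v.1 v.2.1 v.2.2 i j) (x : ℝ) :
    Continuous fun v : ℝ × ℝ => w x v.1 v.2 :=
  continuous_matrix fun i j => (hw i j).continuous.comp (continuous_const.prodMk continuous_id)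

lemma IsScattering.contDiff_one (hp : IsScattering p) (i j : Fin m) :
    ContDiff ℝ 1 fun v : ℝ × ℝ => p v.1 v.2 i j :=
  (hp.1 i j).of_le (by exact_mod_cast le_top)

lemma IsScattering.pder_one_zero_apply (hp : IsScattering p) (z ζ : ℝ) (i j : Fin m) :
    pder 1 0 p z ζ i j = fderiv ℝ (fun v : ℝ × ℝ => p v.1 v.2 i j) (z, ζ) (1, 0) := by
  simpa [pder] using (hasDerivAt_fst_of_contDiff (hp.contDiff_one i j) z ζ).deriv

lemma IsScattering.pder_zero_one_apply (hp : IsScattering p) (z ζ : ℝ) (i j : Fin m) :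
    pder 0 1 p z ζ i j = fderiv ℝ (fun v : ℝ × ℝ => p v.1 v.2 i j) (z, ζ) (0, 1) := by
  simpa [pder] using (hasDerivAt_snd_of_contDiff (hp.contDiff_one i j) z ζ).deriv

lemma IsScattering.continuous_pder_zero_zero (hp : IsScattering p) :
    Continuous fun v : ℝ × ℝ => pder 0 0 p v.1 v.2 := by
  simpa only [pder_zero_zero] using continuous_matrix fun i j => (hp.1 i j).continuous

lemma IsScattering.continuous_pder_one_zero (hp : IsScattering p) :
    Continuous fun v : ℝ × ℝ => pder 1 0 p v.1 v.2 :=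
  continuous_matrix fun i j => by
    simpa only [hp.pder_one_zero_apply] using
      ((hp.contDiff_one i j).continuous_fderiv one_ne_zero).clm_apply continuous_const

lemma IsScattering.continuous_pder_zero_one (hp : IsScattering p) :
    Continuous fun v : ℝ × ℝ => pder 0 1 p v.1 v.2 :=
  continuous_matrix fun i j => by
    simpa only [hp.pder_zero_one_apply] using
      ((hp.contDiff_one i j).continuous_fderiv one_ne_zero).clm_apply continuous_const

lemma IsScattering.regular_pSh (hp : IsScattering p) (x : ℝ) {a b : ℕ}
    (hc : Continuous fun v : ℝ × ℝ => pder a b p v.1 v.2) : Regular (pSh p x a b) :=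
  ((hp.2 a b).regular hc).comp_add x

lemma IsScattering.hasDerivAt_pSh_fst (hp : IsScattering p) (x t ζ : ℝ) (i j : Fin m) :
    HasDerivAt (fun s => pSh p x 0 0 s ζ i j) (pSh p x 1 0 t ζ i j) t := by
  simp only [pSh, pder_zero_zero, hp.pder_one_zero_apply]
  exact (hasDerivAt_fst_of_contDiff (hp.contDiff_one i j) (t + x) (ζ + x)).comp_add_const t x

lemma IsScattering.hasDerivAt_pSh_snd (hp : IsScattering p) (x z t : ℝ) (i j : Fin m) :
    HasDerivAt (fun s => pSh p x 0 0 z s i j) (pSh p x 0 1 z t i j) t := by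
  simp only [pSh, pder_zero_zero, hp.pder_zero_one_apply]
  exact (hasDerivAt_snd_of_contDiff (hp.contDiff_one i j) (z + x) (t + x)).comp_add_const t x

end Scattering

/-- **Square of the skew solution form:** `[V]² = {V P̂₁ V} + {V P_{[1,0]} V†}`;
explicitly, `(w₊ − w₋)(z,0)·(w₊ − w₋)(0,ζ)
 = ([[V P̂₁ V]] − [[V† P̂₁ V†]])(z,ζ) + ([[V P_{[1,0]} V†]] − [[V† P_{[1,0]} V]])(z,ζ)`
for a scattering function `p` and resolvent kernels `w₊`, `w₋` for `p`. -/
theorem skew_form_squared {m : ℕ} (p : Ker m) (hp : IsScattering p)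
    (wp wm : ℝ → Ker m) (hwp : IsResolventPlus p wp) (hwm : IsResolventMinus p wm)
    (x : ℝ) :
    ∀ z ∈ Set.Iic (0:ℝ), ∀ ζ ∈ Set.Iic (0:ℝ),
      ((wp x - wm x) z 0) * ((wp x - wm x) 0 ζ)
      =
      (vAv (wp x) (pHat1 p x) (wp x) - vAv (wm x) (pHat1 p x) (wm x)) z ζ
      + (vAv (wp x) (pBr p x 1 0) (wm x) - vAv (wm x) (pBr p x 1 0) (wp x)) z ζ := by
  intro z _ ζ _
  obtain ⟨hWsmooth, hWdecay, hWl, hWr⟩ := hwp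
  obtain ⟨hMsmooth, hMdecay, hMl, hMr⟩ := hwm
  have hdW : KernelDecay (wp x) := by
    simpa only [pder_zero_zero, xder_zero] using hWdecay 0 0 0 x
  have hdM : KernelDecay (wm x) := by
    simpa only [pder_zero_zero, xder_zero] using hMdecay 0 0 0 x
  exact skew_form_squared_of_regular (hp.regular_pSh x hp.continuous_pder_zero_zero)
    (hp.regular_pSh x hp.continuous_pder_one_zero) (hp.regular_pSh x hp.continuous_pder_zero_one)
    (hp.hasDerivAt_pSh_fst x) (hp.hasDerivAt_pSh_snd x)
    (hdW.regular (continuous_apply_of_contDiff hWsmooth x))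
    (hdM.regular (continuous_apply_of_contDiff hMsmooth x)) hdW.2.2.2.2 hdM.2.2.2.2
    (hWl x) (hWr x) (hMl x) (hMr x) z ζ

end NCKP
end

section
/- From the log-potential mKP equation to the mKP form (equations (1.2) ⇒ (1.4)). Let q : ℝ³ → GL_m(ℂ) be smooth (pointwise invertible m×m matrices, coordinates (x,y,t)), and let s : ℝ³ → ℂ^{m×m} be smooth with ∂_x s = ∂_y(q^{-1}q_y + (q^{-1}q_x)²), where subscripts denote partial derivatives. Suppose q satisfies the log-potential mKP equation q·s = (1/3)(q_t − q_{xxx}) + q_x q^{-1} q_{xx} + q_x q^{-1} q_y + q_y q^{-1} q_x. Then g := q^{-1}q_x and f := q^{-1}q_y satisfy f + g² = q^{-1}q_y + (q^{-1}q_x)² (so that s plays the role of D(f + g²)), and the non-commutative modified KP equations hold in the form: f_x = g_y − [g, f], and f_y = (1/3)(g_t − g_{xxx}) + {g_x, f + g²} − [g, s]. -/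
/-!
On smooth matrix-valued functions the partial derivatives are commuting derivations and `q` is a
unit, so the statement is an identity in a noncommutative differential algebra. With
`g = q⁻¹q_x`, `f = q⁻¹q_y`, `h = q⁻¹q_t`, commuting the derivatives of `q` gives the
zero-curvature equations `f_x = g_y − [g,f]` and `h_x = g_t − [g,h]`. Since
`q⁻¹(q a)_x = a_x + g a`, the log-potential equation expresses `s` as a differential polynomial
in `g`, `f`, `h`; then `f_y = s_x − (g²)_y`, and after eliminating `g_y` and `g_t` by the
zero-curvature equations the mKP equation becomes a polynomial identity.
-/

open MeasureTheory Filter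

namespace NCKP

/-- `∂_x^c ∂_y^d ∂_t^e` of a matrix-valued function of `(x,y,t)`, entrywise. -/
noncomputable def D3 {m : ℕ} (c d e : ℕ) (u : ℝ → ℝ → ℝ → Mat m) : ℝ → ℝ → ℝ → Mat m :=
  fun x y t => Matrix.of fun i j =>
    iteratedDeriv c (fun x' =>
      iteratedDeriv d (fun y' =>
        iteratedDeriv e (fun t' => u x' y' t' i j) t) y) x

def Smooth3 {m : ℕ} (u : ℝ → ℝ → ℝ → Mat m) : Prop :=
  ∀ i j : Fin m, ContDiff ℝ (⊤ : ℕ∞) (fun v : ℝ × ℝ × ℝ => u v.1 v.2.1 v.2.2 i j)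

end NCKP

namespace NCKP

section Leibniz

variable {A : Type*} [Ring A] {D D₁ D₂ : A → A}

theorem map_one_of_leibniz (hD : ∀ a b, D (a * b) = D a * b + a * D b) : D 1 = 0 := by
  simpa using hD 1 1

theorem map_units_mul_of_leibniz (hD : ∀ a b, D (a * b) = D a * b + a * D b) (U : Aˣ) (a : A) :
    D (U * a) = U * (D a + ↑U⁻¹ * D U * a) := by
  rw [hD, mul_add, mul_assoc, Units.mul_inv_cancel_left, add_comm]

theorem map_units_inv_of_leibniz (hD : ∀ a b, D (a * b) = D a * b + a * D b) (U : Aˣ) :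
    D ↑U⁻¹ = -(↑U⁻¹ * D U * ↑U⁻¹) := by
  have h : D ↑U⁻¹ * U + ↑U⁻¹ * D U = 0 := by rw [← hD, U.inv_mul, map_one_of_leibniz hD]
  calc D ↑U⁻¹ = (D ↑U⁻¹ * U + ↑U⁻¹ * D U) * ↑U⁻¹ - ↑U⁻¹ * D U * ↑U⁻¹ := by
        rw [add_mul, Units.mul_inv_cancel_right]; abel
    _ = -(↑U⁻¹ * D U * ↑U⁻¹) := by rw [h, zero_mul, zero_sub]

theorem zero_curvature_of_leibniz (hD₁ : ∀ a b, D₁ (a * b) = D₁ a * b + a * D₁ b)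
    (hD₂ : ∀ a b, D₂ (a * b) = D₂ a * b + a * D₂ b) (U : Aˣ) (hcomm : D₁ (D₂ U) = D₂ (D₁ U)) :
    D₁ (↑U⁻¹ * D₂ U) = D₂ (↑U⁻¹ * D₁ U)
      - (↑U⁻¹ * D₁ U * (↑U⁻¹ * D₂ U) - ↑U⁻¹ * D₂ U * (↑U⁻¹ * D₁ U)) := by
  rw [hD₁, hD₂, map_units_inv_of_leibniz hD₁, map_units_inv_of_leibniz hD₂, hcomm]
  noncomm_ring

end Leibniz

section MKP

variable {K A : Type*} [Field K] [CharZero K] [Ring A] [Algebra K A]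

-- `h` plays `q⁻¹q_t` and `gt` plays `g_t`; `hs` is the log-potential equation solved for `s`.
theorem mKP_of_zero_curvature (dx dy : A →ₗ[K] A)
    (hdx : ∀ a b, dx (a * b) = dx a * b + a * dx b) (hdy : ∀ a b, dy (a * b) = dy a * b + a * dy b)
    {g f h s gt : A}
    (hfx : dx f = dy g - (g * f - f * g)) (hhx : dx h = gt - (g * h - h * g))
    (hs : s = (1 / 3 : K) • (h - (dx (dx g + g * g) + g * (dx g + g * g)))
      + g * (dx g + g * g) + g * f + f * g)
    (hsx : dx s = dy (f + g * g)) :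
    dy f = (1 / 3 : K) • (gt - dx (dx (dx g))) + (dx g * (f + g * g) + (f + g * g) * dx g)
      - (g * s - s * g) := by
  have hfy : dy f = dx s - (dy g * g + g * dy g) := by
    rw [hsx, map_add, hdy]; abel
  have hgy : dy g = dx f + (g * f - f * g) := by rw [hfx]; abel
  have hgt : gt = dx h + (g * h - h * g) := by rw [hhx]; abel
  rw [hfy, hgy, hgt, hs]
  simp only [map_add, map_sub, map_smul, hdx]
  simp only [mul_add, add_mul, mul_sub, sub_mul, mul_assoc, smul_mul_assoc, mul_smul_comm,
    smul_add, smul_sub]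
  match_scalars <;> ring

theorem mKP_of_log_potential (dx dy : A →ₗ[K] A) (dt : A → A)
    (hdx : ∀ a b, dx (a * b) = dx a * b + a * dx b) (hdy : ∀ a b, dy (a * b) = dy a * b + a * dy b)
    (hdt : ∀ a b, dt (a * b) = dt a * b + a * dt b) (U : Aˣ)
    (hxy : dx (dy U) = dy (dx U)) (hxt : dx (dt U) = dt (dx U)) {s g f : A}
    (hg : g = ↑U⁻¹ * dx U) (hf : f = ↑U⁻¹ * dy U)
    (hlp : U * s = (1 / 3 : K) • (dt U - dx (dx (dx U))) + dx U * ↑U⁻¹ * dx (dx U)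
      + dx U * ↑U⁻¹ * dy U + dy U * ↑U⁻¹ * dx U)
    (hsx : dx s = dy (f + g * g)) :
    dx f = dy g - (g * f - f * g) ∧
    dy f = (1 / 3 : K) • (dt g - dx (dx (dx g))) + (dx g * (f + g * g) + (f + g * g) * dx g)
      - (g * s - s * g) := by
  have hfx : dx f = dy g - (g * f - f * g) := by
    rw [hf, hg]; exact zero_curvature_of_leibniz hdx hdy U hxy
  set h := ↑U⁻¹ * dt U with hh
  have hhx : dx h = dt g - (g * h - h * g) := by
    rw [hh, hg]; exact zero_curvature_of_leibniz hdx hdt U hxt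
  have hUx : dx U = U * g := by rw [hg, Units.mul_inv_cancel_left]
  have hUy : dy U = U * f := by rw [hf, Units.mul_inv_cancel_left]
  have hUt : dt U = U * h := by rw [hh, Units.mul_inv_cancel_left]
  have hUxx : dx (dx U) = U * (dx g + g * g) := by
    rw [hUx, map_units_mul_of_leibniz hdx, ← hg]
  have hUxxx : dx (dx (dx U)) = U * (dx (dx g + g * g) + g * (dx g + g * g)) := by
    rw [hUxx, map_units_mul_of_leibniz hdx, ← hg]
  have hs : s = (1 / 3 : K) • (h - (dx (dx g + g * g) + g * (dx g + g * g)))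
      + g * (dx g + g * g) + g * f + f * g := by
    rw [← U.mul_right_inj, hlp, hUxxx, hUxx, hUt, hUx, hUy]
    simp only [mul_add, mul_sub, mul_smul_comm, ← mul_assoc, Units.inv_mul_cancel_right]
  exact ⟨hfx, mKP_of_zero_curvature dx dy hdx hdy hfx hhx hs hsx⟩

end MKP

section SmoothFunctions

-- Any norm would do: only the induced topology matters for smoothness.
attribute [local instance] Matrix.linftyOpNormedAddCommGroup Matrix.linftyOpNormedRing
  Matrix.linftyOpNormedAlgebra

open scoped ContDiff

variable {m : ℕ}

def uncurry3 (u : ℝ → ℝ → ℝ → Mat m) (v : ℝ × ℝ × ℝ) : Mat m := u v.1 v.2.1 v.2.2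

theorem smooth3_iff_contDiff {u : ℝ → ℝ → ℝ → Mat m} :
    Smooth3 u ↔ ContDiff ℝ ∞ (uncurry3 u) := by
  let e : Mat m ≃L[ℝ] (Fin m → Fin m → ℂ) :=
    (Matrix.ofLinearEquiv ℝ).symm.toContinuousLinearEquiv
  rw [← e.comp_contDiff_iff, contDiff_pi]
  simp only [contDiff_pi]
  rfl

theorem smooth3_ringInverse {q : ℝ → ℝ → ℝ → Mat m} (hq : Smooth3 q)
    (hinv : ∀ x y t, IsUnit (q x y t)) : Smooth3 fun x y t => Ring.inverse (q x y t) := by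
  refine smooth3_iff_contDiff.2 <| contDiff_iff_contDiffAt.2 fun v => ?_
  have hv := hinv v.1 v.2.1 v.2.2
  have := contDiffAt_ringInverse ℝ (n := ∞) hv.unit
  rw [hv.unit_spec] at this
  exact this.comp v (smooth3_iff_contDiff.1 hq).contDiffAt

variable (m) in
def smoothSubalgebra : Subalgebra ℂ (ℝ → ℝ → ℝ → Mat m) where
  carrier := {u | Smooth3 u}
  mul_mem' hu hv := smooth3_iff_contDiff.2 <|
    (smooth3_iff_contDiff.1 hu).mul (smooth3_iff_contDiff.1 hv)
  add_mem' hu hv := smooth3_iff_contDiff.2 <|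
    (smooth3_iff_contDiff.1 hu).add (smooth3_iff_contDiff.1 hv)
  algebraMap_mem' _ := smooth3_iff_contDiff.2 contDiff_const

theorem mem_smoothSubalgebra {u : ℝ → ℝ → ℝ → Mat m} : u ∈ smoothSubalgebra m ↔ Smooth3 u :=
  Iff.rfl

theorem contDiff_uncurry3 (u : smoothSubalgebra m) : ContDiff ℝ ∞ (uncurry3 u.1) :=
  smooth3_iff_contDiff.1 u.2

theorem differentiable_uncurry3 (u : smoothSubalgebra m) : Differentiable ℝ (uncurry3 u.1) :=
  (contDiff_uncurry3 u).differentiable (by simp)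

theorem contDiff_fderiv_uncurry3_apply (u : smoothSubalgebra m) (w : ℝ × ℝ × ℝ) :
    ContDiff ℝ ∞ fun v => fderiv ℝ (uncurry3 u.1) v w :=
  ((contDiff_uncurry3 u).fderiv_right (m := ∞) (by simp)).clm_apply contDiff_const

noncomputable def partialDeriv (w : ℝ × ℝ × ℝ) : smoothSubalgebra m →ₗ[ℂ] smoothSubalgebra m where
  toFun u := ⟨fun x y t => fderiv ℝ (uncurry3 u.1) (x, y, t) w,
    mem_smoothSubalgebra.2 <| smooth3_iff_contDiff.2 (contDiff_fderiv_uncurry3_apply u w)⟩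
  map_add' u v := by
    apply Subtype.ext; funext x y t
    exact congrArg (· w) (fderiv_add (differentiable_uncurry3 u _) (differentiable_uncurry3 v _))
  map_smul' c u := by
    apply Subtype.ext; funext x y t
    exact congrArg (· w) (fderiv_const_smul (differentiable_uncurry3 u _) c)

theorem partialDeriv_mul (w : ℝ × ℝ × ℝ) (u v : smoothSubalgebra m) :
    partialDeriv w (u * v) = partialDeriv w u * v + u * partialDeriv w v := by
  apply Subtype.ext; funext x y t
  have := fderiv_mul' (differentiable_uncurry3 u (x, y, t)) (differentiable_uncurry3 v (x, y, t))
  exact (congrArg (· w) this).trans (add_comm _ _)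

theorem partialDeriv_comm (w w' : ℝ × ℝ × ℝ) (u : smoothSubalgebra m) :
    partialDeriv w (partialDeriv w' u) = partialDeriv w' (partialDeriv w u) := by
  apply Subtype.ext; funext x y t
  have hU := contDiff_uncurry3 u
  have hsymm := (hU.contDiffAt (x := (x, y, t))).isSymmSndFDerivAt (by simp; decide)
  have hU' : DifferentiableAt ℝ (fderiv ℝ (uncurry3 u.1)) (x, y, t) :=
    (hU.fderiv_right (m := ∞) (by simp)).differentiable (by simp) _
  have hcomp : ∀ w₁ w₂ : ℝ × ℝ × ℝ,
      fderiv ℝ (fun v => fderiv ℝ (uncurry3 u.1) v w₂) (x, y, t) w₁ =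
        fderiv ℝ (fderiv ℝ (uncurry3 u.1)) (x, y, t) w₁ w₂ := fun w₁ w₂ =>
    congrArg (· w₁)
      ((ContinuousLinearMap.apply ℝ (Mat m) w₂).hasFDerivAt.comp (x, y, t) hU'.hasFDerivAt).fderiv
  exact (hcomp w w').trans ((hsymm.eq w w').trans (hcomp w' w).symm)

noncomputable def smoothUnit (Q : smoothSubalgebra m)
    (hQ : ∀ x y t, IsUnit (Q.1 x y t)) : (smoothSubalgebra m)ˣ where
  val := Q
  inv := ⟨fun x y t => Ring.inverse (Q.1 x y t), smooth3_ringInverse Q.2 hQ⟩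
  val_inv := Subtype.ext <| funext₃ fun x y t => Ring.mul_inverse_cancel _ (hQ x y t)
  inv_val := Subtype.ext <| funext₃ fun x y t => Ring.inverse_mul_cancel _ (hQ x y t)

theorem deriv_entry_comp {U : ℝ × ℝ × ℝ → Mat m} (hU : Differentiable ℝ U) {γ : ℝ → ℝ × ℝ × ℝ}
    {w : ℝ × ℝ × ℝ} {r : ℝ} (hγ : HasDerivAt γ w r) (i j : Fin m) :
    deriv (fun r => U (γ r) i j) r = fderiv ℝ U (γ r) w i j :=
  ((Matrix.entryLinearMap ℝ ℂ i j).toContinuousLinearMap.hasFDerivAt.comp_hasDerivAt r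
    ((hU (γ r)).hasFDerivAt.comp_hasDerivAt r hγ)).deriv

theorem D3_one_zero_zero (u : smoothSubalgebra m) :
    D3 1 0 0 u.1 = partialDeriv (1, 0, 0) u := by
  funext x y t; ext i j
  simp only [D3, Matrix.of_apply, iteratedDeriv_one, iteratedDeriv_zero]
  exact deriv_entry_comp (differentiable_uncurry3 u)
    ((hasDerivAt_id x).prodMk (hasDerivAt_const x (y, t))) i j

theorem D3_zero_one_zero (u : smoothSubalgebra m) :
    D3 0 1 0 u.1 = partialDeriv (0, 1, 0) u := by
  funext x y t; ext i j
  simp only [D3, Matrix.of_apply, iteratedDeriv_one, iteratedDeriv_zero]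
  exact deriv_entry_comp (differentiable_uncurry3 u)
    ((hasDerivAt_const y x).prodMk ((hasDerivAt_id y).prodMk (hasDerivAt_const y t))) i j

theorem D3_zero_zero_one (u : smoothSubalgebra m) :
    D3 0 0 1 u.1 = partialDeriv (0, 0, 1) u := by
  funext x y t; ext i j
  simp only [D3, Matrix.of_apply, iteratedDeriv_one, iteratedDeriv_zero]
  exact deriv_entry_comp (differentiable_uncurry3 u)
    ((hasDerivAt_const t x).prodMk ((hasDerivAt_const t y).prodMk (hasDerivAt_id t))) i j

theorem D3_succ_zero_zero (c : ℕ) (u : ℝ → ℝ → ℝ → Mat m) :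
    D3 (c + 1) 0 0 u = D3 c 0 0 (D3 1 0 0 u) := by
  funext x y t; ext i j
  simp only [D3, Matrix.of_apply, iteratedDeriv_succ', iteratedDeriv_zero]

theorem D3_two_zero_zero (u : smoothSubalgebra m) :
    D3 2 0 0 u.1 = partialDeriv (1, 0, 0) (partialDeriv (1, 0, 0) u) := by
  rw [D3_succ_zero_zero, D3_one_zero_zero, D3_one_zero_zero]

theorem D3_three_zero_zero (u : smoothSubalgebra m) :
    D3 3 0 0 u.1 =
      partialDeriv (1, 0, 0) (partialDeriv (1, 0, 0) (partialDeriv (1, 0, 0) u)) := by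
  rw [D3_succ_zero_zero, D3_one_zero_zero, D3_two_zero_zero]

end SmoothFunctions

local notation "∂ₓ" => partialDeriv (1, 0, 0)
local notation "∂ᵧ" => partialDeriv (0, 1, 0)
local notation "∂ₜ" => partialDeriv (0, 0, 1)

/-- **From the log-potential mKP equation to the mKP form ((1.2) ⇒ (1.4)).**
If `q` is smooth and pointwise invertible, `s` is smooth with
`∂_x s = ∂_y(q⁻¹q_y + (q⁻¹q_x)²)`, and `q` satisfies the log-potential mKP equation,
then `g := q⁻¹q_x` and `f := q⁻¹q_y` satisfy `f + g² = q⁻¹q_y + (q⁻¹q_x)²`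
(`s` plays the role of `D(f+g²)`), together with
`f_x = g_y − [g,f]` and `f_y = (1/3)(g_t − g_xxx) + {g_x, f+g²} − [g,s]`. -/
theorem log_potential_to_mKP {m : ℕ} (q s : ℝ → ℝ → ℝ → Mat m)
    (hq : Smooth3 q) (hs : Smooth3 s)
    (hinv : ∀ x y t : ℝ, IsUnit (q x y t))
    (hsdef : ∀ x y t : ℝ, D3 1 0 0 s x y t
      = D3 0 1 0 (fun x' y' t' =>
          Ring.inverse (q x' y' t') * D3 0 1 0 q x' y' t'
            + (Ring.inverse (q x' y' t') * D3 1 0 0 q x' y' t')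
              * (Ring.inverse (q x' y' t') * D3 1 0 0 q x' y' t')) x y t)
    (hlp : ∀ x y t : ℝ, q x y t * s x y t
      = ((1:ℂ)/3) • (D3 0 0 1 q x y t - D3 3 0 0 q x y t)
        + D3 1 0 0 q x y t * Ring.inverse (q x y t) * D3 2 0 0 q x y t
        + D3 1 0 0 q x y t * Ring.inverse (q x y t) * D3 0 1 0 q x y t
        + D3 0 1 0 q x y t * Ring.inverse (q x y t) * D3 1 0 0 q x y t)
    (g f : ℝ → ℝ → ℝ → Mat m)
    (hgdef : ∀ x y t : ℝ, g x y t = Ring.inverse (q x y t) * D3 1 0 0 q x y t)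
    (hfdef : ∀ x y t : ℝ, f x y t = Ring.inverse (q x y t) * D3 0 1 0 q x y t) :
    (∀ x y t : ℝ, f x y t + g x y t * g x y t
      = Ring.inverse (q x y t) * D3 0 1 0 q x y t
        + (Ring.inverse (q x y t) * D3 1 0 0 q x y t)
          * (Ring.inverse (q x y t) * D3 1 0 0 q x y t)) ∧
    (∀ x y t : ℝ, D3 1 0 0 f x y t
      = D3 0 1 0 g x y t - (g x y t * f x y t - f x y t * g x y t)) ∧
    (∀ x y t : ℝ, D3 0 1 0 f x y t
      = ((1:ℂ)/3) • (D3 0 0 1 g x y t - D3 3 0 0 g x y t)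
        + (D3 1 0 0 g x y t * (f x y t + g x y t * g x y t)
            + (f x y t + g x y t * g x y t) * D3 1 0 0 g x y t)
        - (g x y t * s x y t - s x y t * g x y t)) := by
  obtain ⟨Q, rfl⟩ : ∃ Q : smoothSubalgebra m, ↑Q = q := ⟨⟨q, hq⟩, rfl⟩
  obtain ⟨S, rfl⟩ : ∃ S : smoothSubalgebra m, ↑S = s := ⟨⟨s, hs⟩, rfl⟩
  set U := smoothUnit Q hinv
  set G : smoothSubalgebra m := ↑U⁻¹ * ∂ₓ Q with hG
  set F : smoothSubalgebra m := ↑U⁻¹ * ∂ᵧ Q with hF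
  obtain rfl : ↑G = g := funext₃ fun x y t => by rw [hgdef, D3_one_zero_zero]; rfl
  obtain rfl : ↑F = f := funext₃ fun x y t => by rw [hfdef, D3_zero_one_zero]; rfl
  have hsx : ∂ₓ S = ∂ᵧ (F + G * G) := Subtype.ext <| funext₃ fun x y t => by
    rw [← D3_one_zero_zero, ← D3_zero_one_zero, hsdef]
    simp only [← hgdef, ← hfdef]
    rfl
  have hQS : Q * S = ((1 : ℂ) / 3) • (∂ₜ Q - ∂ₓ (∂ₓ (∂ₓ Q)))
      + ∂ₓ Q * ↑U⁻¹ * ∂ₓ (∂ₓ Q) + ∂ₓ Q * ↑U⁻¹ * ∂ᵧ Q + ∂ᵧ Q * ↑U⁻¹ * ∂ₓ Q :=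
    Subtype.ext <| funext₃ fun x y t => by
      have := hlp x y t
      rw [D3_one_zero_zero, D3_zero_one_zero, D3_zero_zero_one, D3_two_zero_zero,
        D3_three_zero_zero] at this
      exact this
  obtain ⟨hfx, hfy⟩ := mKP_of_log_potential (K := ℂ) (A := smoothSubalgebra m) ∂ₓ ∂ᵧ ∂ₜ
    (partialDeriv_mul _) (partialDeriv_mul _) (partialDeriv_mul _) U
    (partialDeriv_comm _ _ _) (partialDeriv_comm _ _ _) hG hF hQS hsx
  refine ⟨fun x y t => by rw [hfdef, hgdef], fun x y t => ?_, fun x y t => ?_⟩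
  · rw [D3_one_zero_zero, D3_zero_one_zero, hfx]; rfl
  · rw [D3_one_zero_zero, D3_zero_one_zero, D3_zero_zero_one, D3_three_zero_zero, hfy]; rfl

end NCKP
end
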